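/- Let X be a real random variable with E[X] = 0, variance σ² > 0 and β₃ = E|X|³ < ∞, with characteristic function f(t) = E[e^{itX}]. Let α ∈ (0,1) and k = k(n) satisfy k(n)/n^α → 1. Then there exist constants K₋ and K₊ (independent of n, k and t) and an integer n₀ such that for all n ≥ n₀ and all real t with |t| ≤ σ√k/(4 β₃^{1/3}): | f( −√k t / ((n−k) σ) )^{n−k} − (1 − k t²/(2n)) | ≤ K₋ (t² + t⁴) k²/n², and | f( −√k t / ((n+k) σ) )^{n} − (1 − k t²/(2n)) | ≤ K₊ (t² + t⁴) k²/n². -/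

import Mathlib

/-!
Put `x = s²σ²/2`. The second-order Taylor expansion of `e^{iu}`, with remainder `|u|³`, gives
`|f(s) - (1 - x)| ≤ β₃ |s|³`. As `f(s)` and `1 - x` lie in the unit disc, raising to the power
`m` multiplies this error by at most `m`, and `|(1 - x)^m - (1 - m x)| ≤ m²x²/2`. For
`s = √k t / (Dσ)` with `(m, D) = (n - k, n - k)` or `(n, n + k)`, the constraint on `|t|` trades
one factor `|s|` of the cubic term for `k / D`, while `α < 1` forces `k = o(n)`, hence `D ≍ n`.
All three errors are then `O((t² + t⁴) k²/n²)`; for the mismatch `m x - k t²/(2n)` this is the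
estimate `|m / D² - 1/n| ≤ 3k/n²`.
-/

open MeasureTheory ProbabilityTheory Filter Real Set

noncomputable def charFn (μ : Measure ℝ) (t : ℝ) : ℂ :=
  ∫ x, Complex.exp (Complex.I * (t * x)) ∂μ

theorem norm_le_abs_pow_succ_of_hasDerivAt {g g' : ℝ → ℂ} {k : ℕ} (hg0 : g 0 = 0)
    (hg : ∀ v, HasDerivAt g (g' v) v) (hg' : ∀ v, ‖g' v‖ ≤ |v| ^ k) (u : ℝ) :
    ‖g u‖ ≤ |u| ^ (k + 1) := by
  have := (convex_closedBall (0 : ℝ) |u|).norm_image_sub_le_of_norm_hasDerivWithin_le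
    (fun v _ ↦ (hg v).hasDerivWithinAt)
    (fun v hv ↦ (hg' v).trans (pow_le_pow_left₀ (abs_nonneg v) (by simpa using hv) k))
    (Metric.mem_closedBall_self (abs_nonneg u)) (by simp : u ∈ Metric.closedBall (0 : ℝ) |u|)
  simpa [hg0, pow_succ] using this

section TaylorExpI

open Complex

theorem hasDerivAt_ofReal (v : ℝ) : HasDerivAt (fun u : ℝ ↦ (u : ℂ)) 1 v := by
  simpa using (hasDerivAt_id v).ofReal_comp

theorem hasDerivAt_exp_I_mul (v : ℝ) :
    HasDerivAt (fun u : ℝ ↦ exp (I * u)) (I * exp (I * v)) v := by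
  simpa [mul_comm] using ((hasDerivAt_ofReal v).const_mul I).cexp

theorem norm_exp_I_mul_sub_one_sub_I_mul_le (u : ℝ) :
    ‖exp (I * u) - 1 - I * u‖ ≤ |u| ^ 2 := by
  refine norm_le_abs_pow_succ_of_hasDerivAt (g := fun v : ℝ ↦ exp (I * v) - 1 - I * v)
    (g' := fun v ↦ I * (exp (I * v) - 1)) (by simp) (fun v ↦ ?_) (fun v ↦ ?_) u
  · refine (((hasDerivAt_exp_I_mul v).sub_const 1).sub
      ((hasDerivAt_ofReal v).const_mul I)).congr_deriv ?_
    ring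
  · simpa using norm_exp_I_mul_ofReal_sub_one_le (x := v)

theorem norm_exp_I_mul_sub_taylor_le (u : ℝ) :
    ‖exp (I * u) - (1 + I * u - u ^ 2 / 2)‖ ≤ |u| ^ 3 := by
  refine norm_le_abs_pow_succ_of_hasDerivAt
    (g := fun v : ℝ ↦ exp (I * v) - (1 + I * v - v ^ 2 / 2))
    (g' := fun v ↦ I * (exp (I * v) - 1 - I * v)) (by simp) (fun v ↦ ?_) (fun v ↦ ?_) u
  · refine ((hasDerivAt_exp_I_mul v).sub ((((hasDerivAt_ofReal v).const_mul I).const_add 1).sub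
      ((hasDerivAt_ofReal v).pow 2 |>.div_const 2))).congr_deriv ?_
    simp only [mul_one, Nat.cast_ofNat]
    linear_combination (v : ℂ) * I_sq
  · simpa using norm_exp_I_mul_sub_one_sub_I_mul_le v

end TaylorExpI

theorem norm_pow_sub_pow_le_of_norm_le_one {R : Type*} [SeminormedRing R] [NormOneClass R]
    {z w : R} (hz : ‖z‖ ≤ 1) (hw : ‖w‖ ≤ 1) (m : ℕ) :
    ‖z ^ m - w ^ m‖ ≤ m * ‖z - w‖ := by
  induction m with
  | zero => simp
  | succ m ih =>
    calc ‖z ^ (m + 1) - w ^ (m + 1)‖ = ‖z ^ m * (z - w) + (z ^ m - w ^ m) * w‖ := by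
          rw [mul_sub, sub_mul, ← pow_succ, ← pow_succ, sub_add_sub_cancel]
      _ ≤ ‖z‖ ^ m * ‖z - w‖ + ‖z ^ m - w ^ m‖ * ‖w‖ :=
          (norm_add_le _ _).trans (add_le_add ((norm_mul_le _ _).trans
            (mul_le_mul_of_nonneg_right (norm_pow_le _ _) (norm_nonneg _))) (norm_mul_le _ _))
      _ ≤ 1 * ‖z - w‖ + m * ‖z - w‖ * 1 := by
          gcongr
          exact pow_le_one₀ (norm_nonneg z) hz
      _ = (m + 1 : ℕ) * ‖z - w‖ := by push_cast; ring

theorem one_sub_pow_le {x : ℝ} (h0 : 0 ≤ x) (h1 : x ≤ 1) (m : ℕ) :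
    (1 - x) ^ m ≤ 1 - m * x + m ^ 2 * x ^ 2 / 2 := by
  induction m with
  | zero => simp
  | succ m ih =>
    calc (1 - x) ^ (m + 1) ≤ (1 - m * x + m ^ 2 * x ^ 2 / 2) * (1 - x) := by
          rw [pow_succ]; gcongr
      _ ≤ 1 - (m + 1 : ℕ) * x + (m + 1 : ℕ) ^ 2 * x ^ 2 / 2 := by
          push_cast
          nlinarith [mul_nonneg (mul_nonneg (sq_nonneg (m : ℝ)) (sq_nonneg x)) h0, sq_nonneg x]

theorem abs_one_sub_pow_sub_le {x : ℝ} (h0 : 0 ≤ x) (h1 : x ≤ 1) (m : ℕ) :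
    |(1 - x) ^ m - (1 - m * x)| ≤ m ^ 2 * x ^ 2 / 2 := by
  have hlow : 1 - m * x ≤ (1 - x) ^ m := by
    simpa [← sub_eq_add_neg] using one_add_mul_le_pow (a := -x) (by linarith) m
  rw [abs_le]
  constructor <;> nlinarith [one_sub_pow_le h0 h1 m, sq_nonneg ((m : ℝ) * x)]

theorem abs_sub_div_sub_sq_sub_inv_le {n k : ℝ} (hn : 0 < n) (hk : 0 ≤ k) (hkn : 2 * k ≤ n) :
    |(n - k) / (n - k) ^ 2 - 1 / n| ≤ 3 * k / n ^ 2 := by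
  have hD : 0 < n - k := by linarith
  rw [show (n - k) / (n - k) ^ 2 - 1 / n = k / (n * (n - k)) by field_simp; ring,
    abs_of_nonneg (by positivity), div_le_div_iff₀ (by positivity) (by positivity)]
  nlinarith [mul_nonneg (mul_nonneg hk hn.le) (by linarith : 0 ≤ n - 2 * k),
    mul_nonneg (mul_nonneg hk hn.le) hD.le]

theorem abs_div_add_sq_sub_inv_le {n k : ℝ} (hn : 0 < n) (hk : 0 ≤ k) (hkn : k ≤ n) :
    |n / (n + k) ^ 2 - 1 / n| ≤ 3 * k / n ^ 2 := by
  rw [show n / (n + k) ^ 2 - 1 / n = -(k * (2 * n + k) / (n * (n + k) ^ 2)) by field_simp; ring,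
    abs_neg, abs_of_nonneg (by positivity), div_le_div_iff₀ (by positivity) (by positivity)]
  nlinarith [mul_le_mul_of_nonneg_left hkn (by positivity : 0 ≤ k * n ^ 2),
    mul_nonneg (mul_nonneg hk hn.le) (by positivity : 0 ≤ 2 * n * k + k ^ 2)]

theorem taylor_error_terms_le {σ B k n D t s : ℝ} {m : ℕ} (hσ : 0 < σ) (hB : 0 < B)
    (hk : 0 ≤ k) (hn : 0 < n) (hmD : m ≤ D) (hnD : n ≤ 2 * D)
    (hrate : |m / D ^ 2 - 1 / n| ≤ 3 * k / n ^ 2)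
    (hsq : s ^ 2 = k * t ^ 2 / (D ^ 2 * σ ^ 2)) (hBs : B * |s| ≤ k / (4 * D)) :
    m * (B ^ 3 * |s| ^ 3) + m ^ 2 * (s ^ 2 * σ ^ 2 / 2) ^ 2 / 2
        + |m * (s ^ 2 * σ ^ 2 / 2) - k * t ^ 2 / (2 * n)|
      ≤ (B ^ 2 / σ ^ 2 + 2) * (t ^ 2 + t ^ 4) * k ^ 2 / n ^ 2 := by
  have hD : 0 < D := by linarith
  have hmD' : (m : ℝ) / D ≤ 1 := (div_le_one hD).2 hmD
  have hx : s ^ 2 * σ ^ 2 / 2 = k * t ^ 2 / (2 * D ^ 2) := by rw [hsq]; field_simp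
  have hcubic : m * (B ^ 3 * |s| ^ 3) ≤ B ^ 2 / σ ^ 2 * (t ^ 2 * k ^ 2 / n ^ 2) := by
    calc m * (B ^ 3 * |s| ^ 3) = m * (B ^ 2 * s ^ 2 * (B * |s|)) := by rw [← sq_abs s]; ring
      _ ≤ m * (B ^ 2 * s ^ 2 * (k / (4 * D))) := by gcongr
      _ = m / D * (B ^ 2 / σ ^ 2 * (t ^ 2 * k ^ 2 / (4 * D ^ 2))) := by rw [hsq]; field_simp
      _ ≤ 1 * (B ^ 2 / σ ^ 2 * (t ^ 2 * k ^ 2 / n ^ 2)) := by gcongr; nlinarith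
      _ = _ := one_mul _
  have hquartic :
      (m : ℝ) ^ 2 * (s ^ 2 * σ ^ 2 / 2) ^ 2 / 2 ≤ 1 / 2 * (t ^ 4 * k ^ 2 / n ^ 2) := by
    calc (m : ℝ) ^ 2 * (s ^ 2 * σ ^ 2 / 2) ^ 2 / 2
        = (m / D) ^ 2 * (t ^ 4 * k ^ 2 / (8 * D ^ 2)) := by rw [hx]; field_simp; ring
      _ ≤ 1 * (t ^ 4 * k ^ 2 / (2 * n ^ 2)) := by
          gcongr ?_ * ?_
          · exact pow_le_one₀ (by positivity) hmD'
          · exact div_le_div_of_nonneg_left (by positivity) (by positivity) (by nlinarith)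
      _ = _ := by ring
  have hmismatch : |m * (s ^ 2 * σ ^ 2 / 2) - k * t ^ 2 / (2 * n)|
      ≤ 3 / 2 * (t ^ 2 * k ^ 2 / n ^ 2) := by
    calc |m * (s ^ 2 * σ ^ 2 / 2) - k * t ^ 2 / (2 * n)|
        = k * t ^ 2 / 2 * |m / D ^ 2 - 1 / n| := by
          rw [hx, ← abs_of_nonneg (by positivity : 0 ≤ k * t ^ 2 / 2), ← abs_mul]
          congr 1
          field_simp
      _ ≤ k * t ^ 2 / 2 * (3 * k / n ^ 2) := by gcongr
      _ = _ := by ring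
  have : 0 ≤ t ^ 2 * k ^ 2 / n ^ 2 := by positivity
  have : 0 ≤ t ^ 4 * k ^ 2 / n ^ 2 := by positivity
  have : 0 ≤ B ^ 2 / σ ^ 2 := by positivity
  rw [show (B ^ 2 / σ ^ 2 + 2) * (t ^ 2 + t ^ 4) * k ^ 2 / n ^ 2
    = (B ^ 2 / σ ^ 2 + 2) * (t ^ 2 * k ^ 2 / n ^ 2)
      + (B ^ 2 / σ ^ 2 + 2) * (t ^ 4 * k ^ 2 / n ^ 2) by ring]
  nlinarith

theorem tendsto_div_natCast_of_tendsto_div_rpow {f : ℕ → ℝ} {α L : ℝ} (hα : α < 1)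
    (hf : Tendsto (fun n ↦ f n / (n : ℝ) ^ α) atTop (nhds L)) :
    Tendsto (fun n ↦ f n / n) atTop (nhds 0) := by
  have hpow : Tendsto (fun n : ℕ ↦ (n : ℝ) ^ (α - 1)) atTop (nhds 0) :=
    (tendsto_rpow_neg_atTop (by linarith : 0 < 1 - α)).comp tendsto_natCast_atTop_atTop
      |>.congr fun n ↦ by simp
  refine (mul_zero L ▸ hf.mul hpow).congr' ?_
  filter_upwards [eventually_gt_atTop 0] with n hn
  have hn : (0 : ℝ) < n := by exact_mod_cast hn
  rw [rpow_sub hn, rpow_one]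
  field_simp

theorem integral_abs_pow_three_pos {μ : Measure ℝ} {σ : ℝ} (hσ : 0 < σ)
    (hvar : ∫ x, x ^ 2 ∂μ = σ ^ 2) (hint : Integrable (fun x ↦ |x| ^ 3) μ) :
    0 < ∫ x, |x| ^ 3 ∂μ := by
  refine (integral_nonneg fun x ↦ by positivity).lt_of_ne fun h ↦ ?_
  have hae := (integral_eq_zero_iff_of_nonneg (fun x ↦ by positivity) hint).1 h.symm
  have : ∫ x, x ^ 2 ∂μ = 0 :=
    integral_eq_zero_of_ae (hae.mono fun x hx ↦ by simp [show x = 0 by simpa using hx])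
  nlinarith

theorem charFn_eq_charFun (μ : Measure ℝ) (t : ℝ) : charFn μ t = charFun μ t := by
  simp [charFn, charFun_apply_real, mul_comm]

section CharFn

open Complex

variable {μ : Measure ℝ} [IsProbabilityMeasure μ] {σ : ℝ}

theorem integrable_id_of_integrable_abs_pow_three (hint : Integrable (fun x ↦ |x| ^ 3) μ) :
    Integrable (fun x : ℝ ↦ x) μ :=
  (integrable_norm_iff aestronglyMeasurable_id).1 <| by
    simpa using integrable_norm_pow_of_le aestronglyMeasurable_id (p := 1) (by norm_num) hint

theorem integrable_sq_of_integrable_abs_pow_three (hint : Integrable (fun x ↦ |x| ^ 3) μ) :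
    Integrable (fun x : ℝ ↦ x ^ 2) μ := by
  simpa using integrable_norm_pow_of_le aestronglyMeasurable_id (p := 2) (by norm_num) hint

theorem integrable_one_sub_sq_add_I_mul (hint : Integrable (fun x ↦ |x| ^ 3) μ) (s : ℝ) :
    Integrable (fun x : ℝ ↦ ((1 - s ^ 2 / 2 * x ^ 2 : ℝ) : ℂ) + I * s * x) μ :=
  ((integrable_const 1).sub
    ((integrable_sq_of_integrable_abs_pow_three hint).const_mul _)).ofReal.add
      ((integrable_id_of_integrable_abs_pow_three hint).ofReal.const_mul _)

theorem integral_one_sub_sq_add_I_mul (hint : Integrable (fun x ↦ |x| ^ 3) μ)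
    (hmean : ∫ x, x ∂μ = 0) (hvar : ∫ x, x ^ 2 ∂μ = σ ^ 2) (s : ℝ) :
    ∫ x : ℝ, (((1 - s ^ 2 / 2 * x ^ 2 : ℝ) : ℂ) + I * s * x) ∂μ
      = ((1 - s ^ 2 * σ ^ 2 / 2 : ℝ) : ℂ) := by
  have h2 := (integrable_sq_of_integrable_abs_pow_three hint).const_mul (s ^ 2 / 2)
  rw [integral_add ((integrable_const 1).sub h2).ofReal
      ((integrable_id_of_integrable_abs_pow_three hint).ofReal.const_mul _),
    integral_complex_ofReal, integral_const_mul, integral_complex_ofReal,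
    integral_sub (integrable_const 1) h2, integral_const_mul, hmean, hvar]
  simp; ring

theorem norm_charFn_sub_le (hint : Integrable (fun x ↦ |x| ^ 3) μ) (hmean : ∫ x, x ∂μ = 0)
    (hvar : ∫ x, x ^ 2 ∂μ = σ ^ 2) (s : ℝ) :
    ‖charFn μ s - ((1 - s ^ 2 * σ ^ 2 / 2 : ℝ) : ℂ)‖
      ≤ (∫ x, |x| ^ 3 ∂μ) * |s| ^ 3 := by
  have hexp : Integrable (fun x : ℝ ↦ exp (I * (s * x))) μ :=
    .of_bound (by fun_prop) 1 (ae_of_all _ fun x ↦ by simp [norm_exp])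
  rw [charFn, ← integral_one_sub_sq_add_I_mul hint hmean hvar,
    ← integral_sub hexp (integrable_one_sub_sq_add_I_mul hint s), ← integral_mul_const]
  refine norm_integral_le_of_norm_le (hint.mul_const _) (ae_of_all _ fun x ↦ ?_)
  calc _ = ‖exp (I * ↑(s * x)) - (1 + I * ↑(s * x) - ↑(s * x) ^ 2 / 2)‖ := by
        congr 1; push_cast; ring
    _ ≤ |s * x| ^ 3 := norm_exp_I_mul_sub_taylor_le _
    _ = |x| ^ 3 * |s| ^ 3 := by rw [abs_mul]; ring

theorem norm_charFn_pow_sub_le (hint : Integrable (fun x ↦ |x| ^ 3) μ)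
    (hmean : ∫ x, x ∂μ = 0) (hvar : ∫ x, x ^ 2 ∂μ = σ ^ 2) {s : ℝ}
    (hs : s ^ 2 * σ ^ 2 / 2 ≤ 1) (m : ℕ) :
    ‖charFn μ s ^ m - ((1 - m * (s ^ 2 * σ ^ 2 / 2) : ℝ) : ℂ)‖
      ≤ m * ((∫ x, |x| ^ 3 ∂μ) * |s| ^ 3) + m ^ 2 * (s ^ 2 * σ ^ 2 / 2) ^ 2 / 2 := by
  set x := s ^ 2 * σ ^ 2 / 2
  have hx : 0 ≤ x := by positivity
  have hw : ‖((1 - x : ℝ) : ℂ)‖ ≤ 1 := by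
    rw [Complex.norm_real, Real.norm_eq_abs, abs_le]; constructor <;> linarith
  calc _ = ‖(charFn μ s ^ m - ((1 - x : ℝ) : ℂ) ^ m)
        + (((1 - x) ^ m - (1 - m * x) : ℝ) : ℂ)‖ := by
        push_cast; ring_nf
    _ ≤ m * ‖charFn μ s - ((1 - x : ℝ) : ℂ)‖ + |(1 - x) ^ m - (1 - m * x)| := by
        refine (norm_add_le _ _).trans (add_le_add ?_ (Complex.norm_real _).le)
        exact norm_pow_sub_pow_le_of_norm_le_one
          (charFn_eq_charFun μ s ▸ norm_charFun_le_one s) hw m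
    _ ≤ _ := by
        gcongr
        · exact norm_charFn_sub_le hint hmean hvar s
        · exact abs_one_sub_pow_sub_le hx hs m

theorem norm_charFn_rescaled_pow_sub_le (hσ : 0 < σ) (hint : Integrable (fun x ↦ |x| ^ 3) μ)
    (hmean : ∫ x, x ∂μ = 0) (hvar : ∫ x, x ^ 2 ∂μ = σ ^ 2) {B : ℝ} (hB : 0 < B)
    (hB3 : B ^ 3 = ∫ x, |x| ^ 3 ∂μ) {m : ℕ} {k n D t : ℝ} (hk : 0 ≤ k) (hn : 0 < n)
    (hmD : m ≤ D) (hnD : n ≤ 2 * D) (hkn : σ * k ≤ B * n)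
    (hrate : |m / D ^ 2 - 1 / n| ≤ 3 * k / n ^ 2) (ht : |t| ≤ σ * √k / (4 * B)) :
    ‖charFn μ (-√k * t / (D * σ)) ^ m - ((1 - k * t ^ 2 / (2 * n) : ℝ) : ℂ)‖
      ≤ (B ^ 2 / σ ^ 2 + 2) * (t ^ 2 + t ^ 4) * k ^ 2 / n ^ 2 := by
  set s := -√k * t / (D * σ)
  have hD : 0 < D := by linarith
  have hsq : s ^ 2 = k * t ^ 2 / (D ^ 2 * σ ^ 2) := by
    rw [div_pow, neg_mul, neg_sq, mul_pow, mul_pow, sq_sqrt hk]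
  have hBs : B * |s| ≤ k / (4 * D) := by
    calc B * |s| = B * (√k * |t| / (D * σ)) := by
          rw [abs_div, abs_mul, abs_neg, abs_of_nonneg (sqrt_nonneg k),
            abs_of_pos (by positivity : 0 < D * σ)]
      _ ≤ B * (√k * (σ * √k / (4 * B)) / (D * σ)) := by gcongr
      _ = k / (4 * D) := by field_simp; rw [sq_sqrt hk]
  have ht2 : t ^ 2 ≤ σ ^ 2 * k / (16 * B ^ 2) := by
    calc t ^ 2 = |t| ^ 2 := (sq_abs t).symm
      _ ≤ (σ * √k / (4 * B)) ^ 2 := by gcongr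
      _ = σ ^ 2 * k / (16 * B ^ 2) := by rw [div_pow, mul_pow, mul_pow, sq_sqrt hk]; ring
  have hx1 : s ^ 2 * σ ^ 2 / 2 ≤ 1 := by
    have : (σ * k) ^ 2 ≤ (B * n) ^ 2 := by gcongr
    rw [hsq, show k * t ^ 2 / (D ^ 2 * σ ^ 2) * σ ^ 2 / 2 = k * t ^ 2 / (2 * D ^ 2) by
      field_simp, div_le_one (by positivity)]
    calc k * t ^ 2 ≤ k * (σ ^ 2 * k / (16 * B ^ 2)) := by gcongr
      _ = (σ * k) ^ 2 / (16 * B ^ 2) := by ring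
      _ ≤ (B * n) ^ 2 / (16 * B ^ 2) := by gcongr
      _ ≤ 2 * D ^ 2 := by
          rw [div_le_iff₀ (by positivity)]; nlinarith [mul_self_le_mul_self hn.le hnD]
  calc _ ≤ ‖charFn μ s ^ m - ((1 - m * (s ^ 2 * σ ^ 2 / 2) : ℝ) : ℂ)‖
        + ‖((1 - m * (s ^ 2 * σ ^ 2 / 2) : ℝ) : ℂ)
          - ((1 - k * t ^ 2 / (2 * n) : ℝ) : ℂ)‖ :=
        norm_sub_le_norm_sub_add_norm_sub _ _ _
    _ = ‖charFn μ s ^ m - ((1 - m * (s ^ 2 * σ ^ 2 / 2) : ℝ) : ℂ)‖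
        + |m * (s ^ 2 * σ ^ 2 / 2) - k * t ^ 2 / (2 * n)| := by
        rw [← ofReal_sub, norm_real, Real.norm_eq_abs, sub_sub_sub_cancel_left, abs_sub_comm]
    _ ≤ m * (B ^ 3 * |s| ^ 3) + m ^ 2 * (s ^ 2 * σ ^ 2 / 2) ^ 2 / 2
        + |m * (s ^ 2 * σ ^ 2 / 2) - k * t ^ 2 / (2 * n)| := by
        rw [hB3]; gcongr; exact norm_charFn_pow_sub_le hint hmean hvar hx1 m
    _ ≤ _ := taylor_error_terms_le hσ hB hk hn hmD hnD hrate hsq hBs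

end CharFn

theorem small_sum_charfun_bounds_general
    (μ : Measure ℝ) [IsProbabilityMeasure μ]
    (σ β₃ : ℝ) (hσ : 0 < σ)
    (hmean : (∫ x, x ∂μ) = 0)
    (hvar : (∫ x, x ^ 2 ∂μ) = σ ^ 2)
    (hint : Integrable (fun x => |x| ^ 3) μ)
    (hβ : β₃ = ∫ x, |x| ^ 3 ∂μ)
    (α : ℝ) (hα2 : α < 1)
    (k : ℕ → ℕ)
    (hk : Tendsto (fun n => (k n : ℝ) / (n : ℝ) ^ α) atTop (nhds 1)) :
    ∃ (Kminus Kplus : ℝ) (n₀ : ℕ), ∀ n : ℕ, n₀ ≤ n → ∀ t : ℝ,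
      |t| ≤ σ * Real.sqrt (k n) / (4 * β₃ ^ ((1 : ℝ) / 3)) →
      ‖charFn μ (-(Real.sqrt (k n)) * t / (((n : ℝ) - (k n : ℝ)) * σ)) ^ (n - k n)
          - ((1 - (k n : ℝ) * t ^ 2 / (2 * n) : ℝ) : ℂ)‖
        ≤ Kminus * (t ^ 2 + t ^ 4) * (k n : ℝ) ^ 2 / (n : ℝ) ^ 2 ∧
      ‖charFn μ (-(Real.sqrt (k n)) * t / (((n : ℝ) + (k n : ℝ)) * σ)) ^ n
          - ((1 - (k n : ℝ) * t ^ 2 / (2 * n) : ℝ) : ℂ)‖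
        ≤ Kplus * (t ^ 2 + t ^ 4) * (k n : ℝ) ^ 2 / (n : ℝ) ^ 2 := by
  subst hβ
  set B := (∫ x, |x| ^ 3 ∂μ) ^ ((1 : ℝ) / 3)
  have hβpos := integral_abs_pow_three_pos hσ hvar hint
  have hB : 0 < B := by positivity
  have hB3 : B ^ 3 = ∫ x, |x| ^ 3 ∂μ := by
    simp only [B, one_div]; exact_mod_cast rpow_inv_natCast_pow hβpos.le (by norm_num : 3 ≠ 0)
  have hk0 := tendsto_div_natCast_of_tendsto_div_rpow hα2 hk
  obtain ⟨n₀, hn₀⟩ := eventually_atTop.1 <|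
    (hk0.eventually_lt_const (by norm_num : (0 : ℝ) < 1 / 2)).and
      (hk0.eventually_lt_const (by positivity : 0 < B / σ)) |>.and (eventually_gt_atTop 0)
  refine ⟨B ^ 2 / σ ^ 2 + 2, B ^ 2 / σ ^ 2 + 2, n₀, fun n hn t ht ↦ ?_⟩
  obtain ⟨⟨hhalf, hBσ⟩, hpos⟩ := hn₀ n hn
  have hn : (0 : ℝ) < n := by exact_mod_cast hpos
  have hk2 : 2 * (k n : ℝ) ≤ n := by rw [div_lt_iff₀ hn] at hhalf; linarith
  have hkB : σ * k n ≤ B * n := by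
    rw [div_lt_iff₀ hn, div_mul_eq_mul_div, lt_div_iff₀ hσ] at hBσ; linarith
  have hkn : k n ≤ n := by exact_mod_cast (by linarith : (k n : ℝ) ≤ n)
  have hk : (0 : ℝ) ≤ k n := Nat.cast_nonneg _
  constructor
  · refine norm_charFn_rescaled_pow_sub_le hσ hint hmean hvar hB hB3 hk hn
      (Nat.cast_sub hkn).le (by linarith) hkB ?_ ht
    rw [Nat.cast_sub hkn]
    exact abs_sub_div_sub_sq_sub_inv_le hn hk hk2
  · exact norm_charFn_rescaled_pow_sub_le hσ hint hmean hvar hB hB3 hk hn (by linarith)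
      (by linarith) hkB (abs_div_add_sq_sub_inv_le hn hk (by linarith)) ht

/-- Lemma `Proof1.3` of the paper: bounds on the characteristic function of the
small rescaled sums. -/
theorem small_sum_charfun_bounds
    (μ : Measure ℝ) [IsProbabilityMeasure μ]
    (σ β₃ : ℝ) (hσ : 0 < σ)
    (hmean : (∫ x, x ∂μ) = 0)
    (hvar : (∫ x, x ^ 2 ∂μ) = σ ^ 2)
    (hint : Integrable (fun x => |x| ^ 3) μ)
    (hβ : β₃ = ∫ x, |x| ^ 3 ∂μ)
    (α : ℝ) (hα1 : 0 < α) (hα2 : α < 1)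
    (k : ℕ → ℕ) (hkpos : ∀ n, 0 < k n)
    (hk : Tendsto (fun n => (k n : ℝ) / (n : ℝ) ^ α) atTop (nhds 1)) :
    ∃ (Kminus Kplus : ℝ) (n₀ : ℕ), ∀ n : ℕ, n₀ ≤ n → ∀ t : ℝ,
      |t| ≤ σ * Real.sqrt (k n) / (4 * β₃ ^ ((1 : ℝ) / 3)) →
      ‖charFn μ (-(Real.sqrt (k n)) * t / (((n : ℝ) - (k n : ℝ)) * σ)) ^ (n - k n)
          - ((1 - (k n : ℝ) * t ^ 2 / (2 * n) : ℝ) : ℂ)‖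
        ≤ Kminus * (t ^ 2 + t ^ 4) * (k n : ℝ) ^ 2 / (n : ℝ) ^ 2 ∧
      ‖charFn μ (-(Real.sqrt (k n)) * t / (((n : ℝ) + (k n : ℝ)) * σ)) ^ n
          - ((1 - (k n : ℝ) * t ^ 2 / (2 * n) : ℝ) : ℂ)‖
        ≤ Kplus * (t ^ 2 + t ^ 4) * (k n : ℝ) ^ 2 / (n : ℝ) ^ 2 :=
  small_sum_charfun_bounds_general μ σ β₃ hσ hmean hvar hint hβ α hα2 k hk
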